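/- Let M_S(ℂ) be ℤ_N-graded as by block degrees j − i mod N, let q be a primitive N-th root of unity, let e ∈ M_S(ℂ) be homogeneous of degree 1 with e^N = λ·1 for some λ ∈ ℂ, and define d(A) = eA − q^a A e for A homogeneous of degree a. Then d satisfies the q-Leibniz rule d(AB) = d(A)B + q^a A d(B) for A of degree a, and d^N = 0. -/
import Mathlib

open Finset

theorem prod_smul_transfer {A : Type*} [CommRing A] [Algebra ℂ A] (N : ℕ) (f : ℕ → ℂ)
    (h : ∀ s t : ℂ, ∏ i ∈ range N, (s - f i * t) = s ^ N - t ^ N) (x y : A) :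
    ∏ i ∈ range N, (x - f i • y) = x ^ N - y ^ N := by
  have hpoly : (∏ i ∈ range N, (MvPolynomial.X 0 - MvPolynomial.C (f i) * MvPolynomial.X 1) :
      MvPolynomial (Fin 2) ℂ) = MvPolynomial.X 0 ^ N - MvPolynomial.X 1 ^ N := by
    apply MvPolynomial.funext
    intro v
    simp only [map_prod, map_sub, map_mul, map_pow, MvPolynomial.eval_X, MvPolynomial.eval_C]
    exact h (v 0) (v 1)
  have := congrArg (MvPolynomial.aeval (R := ℂ) (S₁ := A) ![x, y]) hpoly
  simpa [Algebra.smul_def] using this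

theorem scalar_prod_identity (N : ℕ) (hN : 0 < N) (q : ℂ) (hq : IsPrimitiveRoot q N)
    (a : ZMod N) [NeZero N] (s t : ℂ) :
    ∏ i ∈ range N, (s - q ^ ((a + (i : ZMod N)).val) * t) = s ^ N - t ^ N := by
  have qmod : ∀ m : ℕ, q ^ (m % N) = q ^ m := by
    intro m
    conv_rhs => rw [← Nat.div_add_mod m N]
    rw [pow_add, pow_mul, hq.pow_eq_one, one_pow, one_mul]
  rw [hq.pow_sub_pow_eq_prod_sub_mul s t hN]
  refine Finset.prod_bij (fun i _ => q ^ ((a + (i : ZMod N)).val)) ?_ ?_ ?_ ?_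
  · intro i _
    rw [Polynomial.mem_nthRootsFinset hN, ← pow_mul, mul_comm, pow_mul, hq.pow_eq_one, one_pow]
  · intro i hi j hj h
    simp only [mem_range] at hi hj
    have := hq.pow_inj (ZMod.val_lt _) (ZMod.val_lt _) h
    have h2 : (a + (i : ZMod N)) = (a + (j : ZMod N)) := ZMod.val_injective N this
    have h3 : (i : ZMod N) = (j : ZMod N) := add_left_cancel h2
    have := congrArg ZMod.val h3
    rwa [ZMod.val_cast_of_lt hi, ZMod.val_cast_of_lt hj] at this
  · intro μ hμ
    rw [Polynomial.mem_nthRootsFinset hN] at hμ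
    obtain ⟨j, hj, rfl⟩ := hq.eq_pow_of_pow_eq_one hμ
    refine ⟨((j : ZMod N) - a).val, ?_, ?_⟩
    · simpa [mem_range] using ZMod.val_lt _
    · show q ^ (a + (((((j : ZMod N) - a).val : ℕ)) : ZMod N)).val = q ^ j
      rw [ZMod.natCast_val, ZMod.cast_id, add_sub_cancel, ZMod.val_natCast, qmod]
  · intro i _; rfl

/-- Block degree in the `ZMod N`-grading of `M_S(ℂ)` associated with a
partition `S = n 0 + ⋯ + n (N-1)`. -/
def blockIdxDeg (N : ℕ) (n : Fin N → ℕ) (x : Σ i : Fin N, Fin (n i)) : ZMod N :=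
  ((x.1 : ℕ) : ZMod N)

/-- `A` is homogeneous of degree `a`: the block `(i,j)` has degree `j - i (mod N)`. -/
def MatIsHomog (N : ℕ) (n : Fin N → ℕ)
    (A : Matrix (Σ i : Fin N, Fin (n i)) (Σ i : Fin N, Fin (n i)) ℂ)
    (a : ZMod N) : Prop :=
  ∀ r c, A r c ≠ 0 → blockIdxDeg N n c - blockIdxDeg N n r = a

/-- The map `d(A) = e·A - q^a·A·e` on elements `A` of degree `a`. -/
noncomputable def matD (N : ℕ) (n : Fin N → ℕ) (q : ℂ)
    (e : Matrix (Σ i : Fin N, Fin (n i)) (Σ i : Fin N, Fin (n i)) ℂ)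
    (a : ZMod N)
    (A : Matrix (Σ i : Fin N, Fin (n i)) (Σ i : Fin N, Fin (n i)) ℂ) :
    Matrix (Σ i : Fin N, Fin (n i)) (Σ i : Fin N, Fin (n i)) ℂ :=
  e * A - q ^ a.val • (A * e)

/-- Iterates of `d`, keeping track of the degree (which raises by one at each step). -/
noncomputable def matDIter (N : ℕ) (n : Fin N → ℕ) (q : ℂ)
    (e : Matrix (Σ i : Fin N, Fin (n i)) (Σ i : Fin N, Fin (n i)) ℂ) :
    ℕ → ZMod N →
    Matrix (Σ i : Fin N, Fin (n i)) (Σ i : Fin N, Fin (n i)) ℂ →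
    Matrix (Σ i : Fin N, Fin (n i)) (Σ i : Fin N, Fin (n i)) ℂ
  | 0, _, A => A
  | k + 1, a, A => matD N n q e (a + (k : ZMod N)) (matDIter N n q e k a A)

/-- for `q` a primitive `N`-th root of unity and `e` homogeneous of
degree 1 with `e^N = λ·1`, the map `d(A) = eA - q^a A e` satisfies the
`q`-Leibniz rule and `d^N = 0`. -/

theorem matrix_qdifferential
    (N : ℕ) (hN : 2 ≤ N) (n : Fin N → ℕ) (hn : ∀ i, 1 ≤ n i)
    (q : ℂ) (hq : IsPrimitiveRoot q N)
    (e : Matrix (Σ i : Fin N, Fin (n i)) (Σ i : Fin N, Fin (n i)) ℂ)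
    (he : MatIsHomog N n e 1) (lam : ℂ) (heN : e ^ N = lam • (1 : Matrix _ _ ℂ)) :
    (∀ (a b : ZMod N) (A B : Matrix (Σ i : Fin N, Fin (n i)) (Σ i : Fin N, Fin (n i)) ℂ),
      MatIsHomog N n A a → MatIsHomog N n B b →
      matD N n q e (a + b) (A * B)
        = matD N n q e a A * B + q ^ a.val • (A * matD N n q e b B)) ∧
    (∀ (a : ZMod N) (A : Matrix (Σ i : Fin N, Fin (n i)) (Σ i : Fin N, Fin (n i)) ℂ),
      MatIsHomog N n A a → matDIter N n q e N a A = 0) := by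
  have hN0 : 0 < N := by omega
  haveI : NeZero N := ⟨by omega⟩
  have qmod : ∀ m : ℕ, q ^ (m % N) = q ^ m := by
    intro m
    conv_rhs => rw [← Nat.div_add_mod m N]
    rw [pow_add, pow_mul, hq.pow_eq_one, one_pow, one_mul]
  constructor
  · intro a b A B _ _
    have hab : q ^ ((a + b).val) = q ^ a.val * q ^ b.val := by
      rw [ZMod.val_add, qmod, pow_add]
    simp only [matD, hab, Matrix.mul_sub, Matrix.sub_mul, Matrix.mul_smul, Matrix.smul_mul,
      smul_smul, smul_sub, smul_add, mul_assoc]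
    module
  · intro a A _
    let Mat := Matrix (Σ i : Fin N, Fin (n i)) (Σ i : Fin N, Fin (n i)) ℂ
    let L : Module.End ℂ Mat := LinearMap.mulLeft ℂ e
    let Rr : Module.End ℂ Mat := LinearMap.mulRight ℂ e
    have hcomm : ∀ x ∈ ({L, Rr} : Set (Module.End ℂ Mat)),
        ∀ y ∈ ({L, Rr} : Set (Module.End ℂ Mat)), x * y = y * x := by
      rintro x (rfl | rfl) y (rfl | rfl)
      · rfl
      · exact (LinearMap.commute_mulLeft_right e e).eq
      · exact (LinearMap.commute_mulLeft_right e e).eq.symm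
      · rfl
    letI : CommRing (Algebra.adjoin ℂ ({L, Rr} : Set (Module.End ℂ Mat))) :=
      Algebra.adjoinCommRingOfComm ℂ hcomm
    let x : Algebra.adjoin ℂ ({L, Rr} : Set (Module.End ℂ Mat)) :=
      ⟨L, Algebra.subset_adjoin (by simp)⟩
    let y : Algebra.adjoin ℂ ({L, Rr} : Set (Module.End ℂ Mat)) :=
      ⟨Rr, Algebra.subset_adjoin (by simp)⟩
    let c : ℕ → ℂ := fun i => q ^ ((a + (i : ZMod N)).val)
    have key : ∏ i ∈ range N, (x - c i • y) = x ^ N - y ^ N :=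
      prod_smul_transfer N c (fun s t => scalar_prod_identity N hN0 q hq a s t) x y
    have main : ∀ k, matDIter N n q e k a A
        = ((↑(∏ i ∈ range k, (x - c i • y)) : Module.End ℂ Mat)) A := by
      intro k
      induction k with
      | zero => simp [matDIter]
      | succ k ih =>
        rw [matDIter, ih, Finset.prod_range_succ_comm]
        have hcoe : ((↑((x - c k • y) * ∏ i ∈ range k, (x - c i • y)) : Module.End ℂ Mat))
            = (L - c k • Rr) * (↑(∏ i ∈ range k, (x - c i • y)) : Module.End ℂ Mat) := rfl
        rw [hcoe]
        simp only [Module.End.mul_apply, LinearMap.sub_apply, LinearMap.smul_apply]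
        rfl
    rw [main N, key]
    have hcoe2 : ((↑(x ^ N - y ^ N) : Module.End ℂ Mat)) = L ^ N - Rr ^ N := rfl
    rw [hcoe2]
    rw [LinearMap.sub_apply]
    show (LinearMap.mulLeft ℂ e ^ N) A - (LinearMap.mulRight ℂ e ^ N) A = 0
    rw [LinearMap.pow_mulLeft, LinearMap.pow_mulRight, LinearMap.mulLeft_apply,
      LinearMap.mulRight_apply, heN, Matrix.smul_mul, Matrix.mul_smul, one_mul, mul_one, sub_self]
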